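/- For every integer n ≥ 2 with n ≠ 3, there exists a finite connected graph G such that the strong resolving graph G_SR is isomorphic to the path P_n on n vertices. -/

import Mathlib

open SimpleGraph

variable {V : Type*}

/-- `u` is maximally distant from `v` in `G`: every neighbor `w` of `u`
satisfies `d(v,w) ≤ d(v,u)`. -/
def MaxDistant (G : SimpleGraph V) (u v : V) : Prop :=
  ∀ w, G.Adj u w → G.dist v w ≤ G.dist v u

/-- `u` and `v` are mutually maximally distant in `G`. -/
def MMD (G : SimpleGraph V) (u v : V) : Prop :=
  MaxDistant G u v ∧ MaxDistant G v u

/-- The boundary of `G`: vertices maximally distant from some vertex. -/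
def boundary (G : SimpleGraph V) : Set V := {u | ∃ v, MaxDistant G u v}

/-- The strong resolving graph on the whole vertex set (`G_{SR+I}`):
two vertices are adjacent iff they are distinct and mutually maximally distant. -/
def srGraphI (G : SimpleGraph V) : SimpleGraph V where
  Adj u v := u ≠ v ∧ MMD G u v
  symm := ⟨by
    rintro u v ⟨hne, h1, h2⟩
    exact ⟨hne.symm, h2, h1⟩⟩
  loopless := ⟨by
    rintro u ⟨hne, _⟩
    exact hne rfl⟩

/-- The strong resolving graph `G_SR`, with vertex set the boundary of `G`. -/
def srGraph (G : SimpleGraph V) : SimpleGraph (boundary G) :=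
  (srGraphI G).induce (boundary G)

/-- `u` and `v` are true twins: distinct vertices with equal closed neighborhoods. -/
def TrueTwins (G : SimpleGraph V) (u v : V) : Prop :=
  u ≠ v ∧ insert u (G.neighborSet u) = insert v (G.neighborSet v)

/-- `u` and `v` are false twins: distinct vertices with equal open neighborhoods. -/
def FalseTwins (G : SimpleGraph V) (u v : V) : Prop :=
  u ≠ v ∧ G.neighborSet u = G.neighborSet v

/-- A vertex is simplicial if its neighborhood induces a complete graph. -/
def IsSimplicial (G : SimpleGraph V) (v : V) : Prop :=
  ∀ a b, G.Adj v a → G.Adj v b → a ≠ b → G.Adj a b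

/-- `w` strongly resolves `u` and `v`. -/
def StronglyResolves (G : SimpleGraph V) (w u v : V) : Prop :=
  G.dist w u = G.dist w v + G.dist v u ∨ G.dist w v = G.dist w u + G.dist u v

/-- `S` is a strong metric generator for `G`. -/
def IsStrongMetricGenerator (G : SimpleGraph V) (S : Set V) : Prop :=
  ∀ u v : V, u ≠ v → ∃ w ∈ S, StronglyResolves G w u v

/-- The strong metric dimension of `G`. -/
noncomputable def sdim (G : SimpleGraph V) : ℕ :=
  sInf {n | ∃ S : Set V, S.ncard = n ∧ IsStrongMetricGenerator G S}

/-- `S` is a vertex cover of `H`. -/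
def IsVertexCover (H : SimpleGraph V) (S : Set V) : Prop :=
  ∀ u v : V, H.Adj u v → u ∈ S ∨ v ∈ S

/-- The vertex cover number of `H`. -/
noncomputable def vertexCoverNumber (H : SimpleGraph V) : ℕ :=
  sInf {n | ∃ S : Set V, S.ncard = n ∧ _root_.IsVertexCover H S}

/-- The graph `G*`: distinct vertices adjacent iff at distance at least two
or true twins. -/
def GStar (G : SimpleGraph V) : SimpleGraph V where
  Adj u v := u ≠ v ∧ (2 ≤ G.dist u v ∨ TrueTwins G u v)
  symm := ⟨by
    rintro u v ⟨hne, h | h⟩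
    · exact ⟨hne.symm, Or.inl (by rwa [G.dist_comm])⟩
    · exact ⟨hne.symm, Or.inr ⟨h.1.symm, h.2.symm⟩⟩⟩
  loopless := ⟨by
    rintro u ⟨hne, _⟩
    exact hne rfl⟩

/-- The direct (tensor) product of two graphs. -/
def DirectProd {α β : Type*} (G : SimpleGraph α) (H : SimpleGraph β) :
    SimpleGraph (α × β) where
  Adj x y := G.Adj x.1 y.1 ∧ H.Adj x.2 y.2
  symm := ⟨fun _ _ h => ⟨h.1.symm, h.2.symm⟩⟩
  loopless := ⟨fun x h => h.1.ne rfl⟩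

/-- The strong product of two graphs. -/
def StrongProd {α β : Type*} (G : SimpleGraph α) (H : SimpleGraph β) :
    SimpleGraph (α × β) where
  Adj x y := x ≠ y ∧ (x.1 = y.1 ∨ G.Adj x.1 y.1) ∧ (x.2 = y.2 ∨ H.Adj x.2 y.2)
  symm := ⟨by
    rintro x y ⟨hne, h1, h2⟩
    exact ⟨hne.symm, h1.imp Eq.symm Adj.symm, h2.imp Eq.symm Adj.symm⟩⟩
  loopless := ⟨by
    rintro x ⟨hne, _⟩
    exact hne rfl⟩

/-- The Cartesian sum (disjunctive product) of two graphs. -/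
def CartSum {α β : Type*} (G : SimpleGraph α) (H : SimpleGraph β) :
    SimpleGraph (α × β) where
  Adj x y := G.Adj x.1 y.1 ∨ H.Adj x.2 y.2
  symm := ⟨fun _ _ h => h.imp Adj.symm Adj.symm⟩
  loopless := ⟨fun x h => h.elim (fun h => h.ne rfl) (fun h => h.ne rfl)⟩

/-- The lexicographic product of two graphs. -/
def LexProd {α β : Type*} (G : SimpleGraph α) (H : SimpleGraph β) :
    SimpleGraph (α × β) where
  Adj x y := G.Adj x.1 y.1 ∨ (x.1 = y.1 ∧ H.Adj x.2 y.2)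
  symm := ⟨fun _ _ h => h.imp Adj.symm (fun h => ⟨h.1.symm, h.2.symm⟩)⟩
  loopless := ⟨fun x h => h.elim (fun h => h.ne rfl) (fun h => h.2.ne rfl)⟩

/-- The disjoint union of `n` copies of the complete graph on `m` vertices. -/
def CopiesComplete (n m : ℕ) : SimpleGraph (Fin n × Fin m) where
  Adj x y := x.1 = y.1 ∧ x.2 ≠ y.2
  symm := ⟨fun _ _ h => ⟨h.1.symm, h.2.symm⟩⟩
  loopless := ⟨fun x h => h.2 rfl⟩

/-- Every pair of vertices lies on a common cycle of length five. -/
def C5Connected (G : SimpleGraph V) : Prop :=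
  ∀ u v : V, ∃ (w : V) (c : G.Walk w w), c.IsCycle ∧ c.length = 5 ∧
    u ∈ c.support ∧ v ∈ c.support

/-!
Let `H` be a graph without isolated vertices and without false twins, and let `G` be the cone over
its complement. The apex makes `G` connected of diameter two, and it is maximally distant from no
vertex because every other vertex has a non-neighbour in `G`. Two other vertices at distance two
(adjacent in `H`) are mutually maximally distant; two at distance at most one are so only when
their `H`-neighbourhoods coincide. Hence `G_SR ≅ H`, and the path `P_n` qualifies for `n ≥ 2`,
`n ≠ 3` (the ends of `P_3` are false twins).
-/

namespace SimpleGraph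

variable {W : Type*} {G : SimpleGraph V} {G' : SimpleGraph W}

section Iso

lemma Iso.dist_eq (e : G ≃g G') (u v : V) : G'.dist (e u) (e v) = G.dist u v := by
  simp only [dist_eq_sInf]
  congr 1
  ext k
  constructor
  · rintro ⟨p, rfl⟩
    exact ⟨(p.map e.symm.toHom).copy (e.symm_apply_apply u) (e.symm_apply_apply v), by simp⟩
  · rintro ⟨p, rfl⟩
    exact ⟨p.map e.toHom, by simp⟩

lemma Iso.maxDistant_iff (e : G ≃g G') {u v : V} :
    MaxDistant G' (e u) (e v) ↔ MaxDistant G u v := by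
  simp only [MaxDistant, e.surjective.forall, e.map_adj_iff, e.dist_eq]

lemma Iso.apply_mem_boundary_iff (e : G ≃g G') {u : V} :
    e u ∈ boundary G' ↔ u ∈ boundary G := by
  simp only [boundary, Set.mem_ofPred_eq, e.surjective.exists, e.maxDistant_iff]

def Iso.srGraph (e : G ≃g G') : srGraph G ≃g srGraph G' where
  toEquiv := e.toEquiv.subtypeEquiv fun _ => e.apply_mem_boundary_iff.symm
  map_rel_iff' := by
    rintro ⟨u, _⟩ ⟨v, _⟩
    simp [_root_.srGraph, srGraphI, MMD, e.maxDistant_iff]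

end Iso

section IsUniversal

variable {z u v : V}

lemma IsUniversal.connected (hz : G.IsUniversal z) : G.Connected := by
  have reach (u : V) : G.Reachable z u := by
    by_cases h : z = u
    · exact h ▸ Reachable.refl z
    · exact (hz h).reachable
  exact (connected_iff_exists_forall_reachable G).mpr ⟨z, reach⟩

lemma IsUniversal.dist_le_two (hz : G.IsUniversal z) (u v : V) : G.dist u v ≤ 2 := by
  by_cases hu : z = u
  · subst hu
    by_cases hv : z = v
    · simp [hv]
    · exact (dist_eq_one_iff_adj.mpr (hz hv)).trans_le one_le_two
  by_cases hv : z = v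
  · subst hv
    exact (dist_eq_one_iff_adj.mpr (hz hu).symm).trans_le one_le_two
  · exact dist_le ((Walk.cons (hz hv) Walk.nil).cons (hz hu).symm)

lemma IsUniversal.dist_eq_two (hz : G.IsUniversal z) (huv : u ≠ v) (h : ¬G.Adj u v) :
    G.dist u v = 2 := by
  have h0 : G.dist u v ≠ 0 := dist_ne_zero_iff_ne_and_reachable.mpr ⟨huv, hz.connected u v⟩
  have h1 : G.dist u v ≠ 1 := fun h' => h (dist_eq_one_iff_adj.mp h')
  have := hz.dist_le_two u v
  omega

lemma IsUniversal.maxDistant_of_not_adj (hz : G.IsUniversal z) (huv : u ≠ v)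
    (h : ¬G.Adj u v) : MaxDistant G u v := by
  intro w _
  rw [hz.dist_eq_two huv.symm fun h' => h h'.symm]
  exact hz.dist_le_two v w

end IsUniversal

def cone (G : SimpleGraph V) : SimpleGraph (Option V) where
  Adj
    | some a, some b => G.Adj a b
    | none, none => False
    | _, _ => True
  symm := ⟨by
    rintro (_ | a) (_ | b) h
    exacts [h, trivial, trivial, h.symm]⟩
  loopless := ⟨by
    rintro (_ | a) h
    exacts [h, h.ne rfl]⟩

@[simp] lemma cone_adj_some_some {a b : V} : (cone G).Adj (some a) (some b) ↔ G.Adj a b :=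
  Iff.rfl

@[simp] lemma cone_adj_none_some {a : V} : (cone G).Adj none (some a) := trivial

lemma isUniversal_cone_none : (cone G).IsUniversal none := by
  rintro (_ | a) h
  exacts [(h rfl).elim, trivial]

section ConeCompl

variable {H : SimpleGraph V} {a b : V}

lemma dist_cone_compl_of_adj (h : H.Adj a b) : (cone Hᶜ).dist (some a) (some b) = 2 :=
  isUniversal_cone_none.dist_eq_two (by simpa using h.ne) (by simp [h])

lemma dist_cone_compl_le_one_of_not_adj (h : ¬H.Adj a b) :
    (cone Hᶜ).dist (some a) (some b) ≤ 1 := by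
  by_cases hab : a = b
  · simp [hab]
  · exact (dist_eq_one_iff_adj.mpr (by simp [hab, h])).le

lemma maxDistant_cone_compl_of_adj (h : H.Adj a b) : MaxDistant (cone Hᶜ) (some a) (some b) :=
  isUniversal_cone_none.maxDistant_of_not_adj (by simpa using h.ne) (by simp [h])

lemma neighborSet_subset_of_maxDistant_cone_compl (hab : ¬H.Adj a b)
    (h : MaxDistant (cone Hᶜ) (some a) (some b)) : H.neighborSet b ⊆ H.neighborSet a := by
  intro w hbw
  by_contra haw
  have hwa : a ≠ w := fun h' => hab (h' ▸ hbw.symm)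
  have hmax := h (some w) (by simpa [hwa] using haw)
  rw [dist_cone_compl_of_adj hbw, ← dist_comm] at hmax
  have hle := dist_cone_compl_le_one_of_not_adj hab
  omega

lemma none_notMem_boundary_cone_compl [Nonempty V] (hH : ∀ a, ¬H.IsIsolated a) :
    none ∉ boundary (cone Hᶜ) := by
  rintro ⟨_ | a, h⟩
  · obtain ⟨a⟩ := ‹Nonempty V›
    have := h (some a) trivial
    rw [dist_self, dist_eq_one_iff_adj.mpr cone_adj_none_some] at this
    omega
  · obtain ⟨b, hab⟩ : ∃ b, H.Adj a b := by simpa [IsIsolated] using hH a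
    have := h (some b) trivial
    rw [dist_cone_compl_of_adj hab, dist_eq_one_iff_adj.mpr cone_adj_none_some.symm] at this
    omega

lemma some_mem_boundary_cone_compl (hH : ∀ a, ¬H.IsIsolated a) (a : V) :
    some a ∈ boundary (cone Hᶜ) := by
  obtain ⟨b, hab⟩ : ∃ b, H.Adj a b := by simpa [IsIsolated] using hH a
  exact ⟨some b, maxDistant_cone_compl_of_adj hab⟩

lemma srGraphI_cone_compl_adj_iff (hT : ∀ a b, ¬FalseTwins H a b) :
    (srGraphI (cone Hᶜ)).Adj (some a) (some b) ↔ H.Adj a b := by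
  refine ⟨fun ⟨hne, hab, hba⟩ => ?_, fun h => ⟨by simpa using h.ne,
    maxDistant_cone_compl_of_adj h, maxDistant_cone_compl_of_adj h.symm⟩⟩
  by_contra h
  refine hT a b ⟨by simpa using hne, ?_⟩
  exact (neighborSet_subset_of_maxDistant_cone_compl (fun h' => h h'.symm) hba).antisymm
    (neighborSet_subset_of_maxDistant_cone_compl h hab)

noncomputable def srGraphConeComplIso [Nonempty V] (hH : ∀ a, ¬H.IsIsolated a)
    (hT : ∀ a b, ¬FalseTwins H a b) : srGraph (cone Hᶜ) ≃g H :=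
  RelIso.symm
    { toEquiv := Equiv.ofBijective (fun a => ⟨some a, some_mem_boundary_cone_compl hH a⟩)
        ⟨fun _ _ h => Option.some_injective _ (congrArg Subtype.val h), by
          rintro ⟨_ | a, hx⟩
          · exact (none_notMem_boundary_cone_compl hH hx).elim
          · exact ⟨a, rfl⟩⟩
      map_rel_iff' := srGraphI_cone_compl_adj_iff hT }

end ConeCompl

lemma pathGraph_not_isIsolated {n : ℕ} (hn : 2 ≤ n) (a : Fin n) :
    ¬(pathGraph n).IsIsolated a := by
  simp only [IsIsolated, pathGraph_adj, not_forall, not_not]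
  by_cases h : a.val + 1 < n
  · exact ⟨⟨a + 1, h⟩, Or.inl rfl⟩
  · exact ⟨⟨a - 1, by omega⟩, Or.inr (by dsimp only; omega)⟩

lemma pathGraph_not_falseTwins {n : ℕ} (hn : n ≠ 3) (a b : Fin n) :
    ¬FalseTwins (pathGraph n) a b := by
  rintro ⟨hab, hN⟩
  wlog hlt : a < b generalizing a b
  · exact this b a hab.symm hN.symm (lt_of_le_of_ne (not_lt.mp hlt) hab.symm)
  have key (w : ℕ) (hw : w < n) :
      (a.val + 1 = w ∨ w + 1 = a.val) ↔ (b.val + 1 = w ∨ w + 1 = b.val) := by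
    simpa [pathGraph_adj] using Set.ext_iff.mp hN ⟨w, hw⟩
  rw [Fin.lt_def] at hlt
  -- a vertex adjacent to exactly one of `a < b`: `b + 1`, else `a - 1`, else `1` (fails only in `P_3`)
  by_cases hb : b.val + 1 < n
  · have := key (b + 1) hb
    omega
  by_cases ha : 1 ≤ a.val
  · have := key (a - 1) (by omega)
    omega
  · have := key 1 (by omega)
    omega

end SimpleGraph

theorem stmt9 (n : ℕ) (hn : 2 ≤ n) (hn3 : n ≠ 3) :
    ∃ (m : ℕ) (G : SimpleGraph (Fin m)), G.Connected ∧
      Nonempty (srGraph G ≃g pathGraph n) := by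
  have : Nonempty (Fin n) := ⟨⟨0, by omega⟩⟩
  let e := Iso.map (finSuccEquiv n).symm (cone (pathGraph n)ᶜ)
  exact ⟨n + 1, _, e.connected_iff.mp isUniversal_cone_none.connected,
    ⟨e.srGraph.symm.trans (srGraphConeComplIso (pathGraph_not_isIsolated hn)
      (pathGraph_not_falseTwins hn3))⟩⟩
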